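/- Let f(x) = √(π/8)·(2π − |x| + sin|x|) for |x| ≤ 2π and f(x) = 0 otherwise. Then the Fourier transform of f (with convention f̂(y) = (1/√(2π))∫ f(x)e^{−ixy}dx) equals f̂(y) = sin²(πy)/(y²(1−y²)) for all real y (interpreted by continuity at y = 0, ±1). In particular f ≥ 0 on ℝ and f̂(y) ≤ 0 for |y| ≥ 1. -/

import Mathlib

open Complex Real

/-- The extremal function `f(x) = √(π/8)(2π − |x| + sin|x|)` on `[-2π, 2π]`, `0` elsewhere. -/
noncomputable def extremalF (x : ℝ) : ℝ :=
  if |x| ≤ 2 * Real.pi then Real.sqrt (Real.pi / 8) * (2 * Real.pi - |x| + Real.sin |x|)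
  else 0

/-- Fourier transform with convention `f̂(y) = (1/√(2π)) ∫ f(x) e^{-ixy} dx`. -/
noncomputable def extremalFhat (y : ℝ) : ℂ :=
  (1 / Real.sqrt (2 * Real.pi) : ℝ) *
    ∫ x : ℝ, (extremalF x : ℂ) * Complex.exp (-Complex.I * x * y)

/-!
Since `f` is even and supported on `[-2π, 2π]`, its Fourier transform is the cosine transform
`f̂(y) = ½ ∫₀^{2π} (2π - x + sin x) cos (xy) dx`, the constant being `2√(π/8)/√(2π) = ½`.
For `y ≠ 0, ±1` the two pieces integrate to `(1 - cos 2πy)/y²` and, by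
`2 sin x cos xy = sin ((1+y)x) + sin ((1-y)x)`, to `(1 - cos 2πy)/(1 - y²)`; their sum is
`2 sin² πy / (y²(1 - y²))`. At `y = ±1` both pieces vanish. Positivity of `f` is `sin t ≤ t`
applied at `2π - |x|`.
-/

open MeasureTheory Set

theorem integral_ite_abs_le_mul_cexp {g : ℝ → ℝ} (hg : Continuous g) {a : ℝ} (ha : 0 ≤ a)
    (y : ℝ) :
    ∫ x : ℝ, ((if |x| ≤ a then g |x| else 0 : ℝ) : ℂ) * cexp (-I * x * y)
      = ((2 * ∫ x in 0..a, g x * Real.cos (x * y) : ℝ) : ℂ) := by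
  set G : ℝ → ℂ := fun x => (g |x| : ℂ) * cexp (-I * x * y)
  have hG : Continuous G := by fun_prop
  have hsupp : (fun x : ℝ => ((if |x| ≤ a then g |x| else 0 : ℝ) : ℂ) * cexp (-I * x * y))
      = (Icc (-a) a).indicator G := by
    ext x
    simp only [indicator, mem_Icc, ← abs_le, G]
    split_ifs <;> simp
  have heven (x : ℝ) : G (-x) + G x = ((2 * (g |x| * Real.cos (x * y)) : ℝ) : ℂ) := by
    have hcos : cexp (-I * ↑(-x) * y) + cexp (-I * x * y) = 2 * Complex.cos (x * y) := by
      rw [two_cos]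
      congr 2 <;> push_cast <;> ring
    simp only [G, abs_neg, ← mul_add, hcos]
    push_cast
    ring
  calc _ = ∫ x in -a..a, G x := by
        rw [hsupp, integral_indicator measurableSet_Icc, integral_Icc_eq_integral_Ioc,
          ← intervalIntegral.integral_of_le (by linarith)]
    _ = ∫ x in 0..a, (G (-x) + G x) := by
        have hGneg : Continuous fun x => G (-x) := hG.comp continuous_neg
        rw [intervalIntegral.integral_add (hGneg.intervalIntegrable _ _)
          (hG.intervalIntegrable _ _), intervalIntegral.integral_comp_neg, neg_zero,
          intervalIntegral.integral_add_adjacent_intervals (hG.intervalIntegrable _ _)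
          (hG.intervalIntegrable _ _)]
    _ = ∫ x in 0..a, ((2 * (g x * Real.cos (x * y)) : ℝ) : ℂ) := by
        refine intervalIntegral.integral_congr fun x hx => ?_
        rw [uIcc_of_le ha] at hx
        rw [heven, abs_of_nonneg hx.1]
    _ = _ := by rw [intervalIntegral.integral_ofReal, intervalIntegral.integral_const_mul]

theorem integral_sub_mul_cos_mul (a : ℝ) {y : ℝ} (hy : y ≠ 0) :
    ∫ x in 0..a, (a - x) * Real.cos (x * y) = (1 - Real.cos (a * y)) / y ^ 2 := by
  have hderiv (x : ℝ) : HasDerivAt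
      (fun x => (a - x) * Real.sin (x * y) / y - Real.cos (x * y) / y ^ 2)
      ((a - x) * Real.cos (x * y)) x := by
    have hxy : HasDerivAt (fun t => t * y) y x := hasDerivAt_mul_const y
    refine ((((hasDerivAt_id' x).const_sub a).mul hxy.sin).div_const y |>.sub
      (hxy.cos.div_const (y ^ 2))).congr_deriv ?_
    field_simp
    ring
  rw [intervalIntegral.integral_eq_sub_of_hasDerivAt (fun x _ => hderiv x)
    (by apply Continuous.intervalIntegrable; fun_prop)]
  simp only [zero_mul, Real.sin_zero, Real.cos_zero, mul_zero, sub_self, zero_div]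
  ring

theorem integral_sin_mul_cos_mul_two_pi {y : ℝ} (hy : y ^ 2 ≠ 1) :
    ∫ x in 0..2 * π, Real.sin x * Real.cos (x * y) = (1 - Real.cos (2 * π * y)) / (1 - y ^ 2) := by
  have hp : 1 + y ≠ 0 := fun h => hy (by nlinarith)
  have hm : 1 - y ≠ 0 := fun h => hy (by nlinarith)
  have hderiv (x : ℝ) : HasDerivAt
      (fun x => -(Real.cos (x * (1 + y)) / (1 + y) + Real.cos (x * (1 - y)) / (1 - y)) / 2)
      (Real.sin x * Real.cos (x * y)) x := by
    refine ((((hasDerivAt_mul_const (1 + y)).cos.div_const (1 + y)).add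
      ((hasDerivAt_mul_const (1 - y)).cos.div_const (1 - y))).neg.div_const 2).congr_deriv ?_
    field_simp
    rw [mul_add, mul_sub, mul_one, Real.sin_add, Real.sin_sub]
    ring
  rw [intervalIntegral.integral_eq_sub_of_hasDerivAt (fun x _ => hderiv x)
    (by apply Continuous.intervalIntegrable; fun_prop)]
  have hplus : Real.cos (2 * π * (1 + y)) = Real.cos (2 * π * y) := by
    rw [mul_add, mul_one, add_comm, Real.cos_add_two_pi]
  have hminus : Real.cos (2 * π * (1 - y)) = Real.cos (2 * π * y) := by
    rw [mul_sub, mul_one, Real.cos_two_pi_sub]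
  simp only [zero_mul, Real.cos_zero, hplus, hminus]
  field_simp
  ring

theorem integral_extremal_mul_cos {y : ℝ} (h0 : y ≠ 0) (h1 : y ^ 2 ≠ 1) :
    ∫ x in 0..2 * π, (2 * π - x + Real.sin x) * Real.cos (x * y)
      = 2 * Real.sin (π * y) ^ 2 / (y ^ 2 * (1 - y ^ 2)) := by
  simp only [add_mul]
  rw [intervalIntegral.integral_add (by apply Continuous.intervalIntegrable; fun_prop)
    (by apply Continuous.intervalIntegrable; fun_prop), integral_sub_mul_cos_mul _ h0,
    integral_sin_mul_cos_mul_two_pi h1, mul_assoc, Real.cos_two_mul, Real.cos_sq']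
  field_simp
  ring

theorem integral_extremal_mul_cos_of_sq_eq_one {y : ℝ} (hy : y ^ 2 = 1) :
    ∫ x in 0..2 * π, (2 * π - x + Real.sin x) * Real.cos (x * y) = 0 := by
  have hcos (x : ℝ) : Real.cos (x * y) = Real.cos x := by
    rcases sq_eq_one_iff.mp hy with rfl | rfl <;> simp
  have hlin := integral_sub_mul_cos_mul (2 * π) one_ne_zero
  simp only [mul_one, Real.cos_two_pi, sub_self, zero_div] at hlin
  simp only [hcos, add_mul]
  rw [intervalIntegral.integral_add (by apply Continuous.intervalIntegrable; fun_prop)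
    (by apply Continuous.intervalIntegrable; fun_prop), hlin, integral_sin_mul_cos₁]
  simp

theorem extremalFhat_eq (y : ℝ) :
    extremalFhat y = ((∫ x in 0..2 * π, (2 * π - x + Real.sin x) * Real.cos (x * y)) / 2 : ℝ) := by
  have hsqrt : √(2 * π) = 4 * √(π / 8) := by
    rw [show 2 * π = 4 ^ 2 * (π / 8) by ring, Real.sqrt_mul (by norm_num),
      Real.sqrt_sq (by norm_num)]
  unfold extremalFhat extremalF
  rw [integral_ite_abs_le_mul_cexp
    (g := fun t => √(π / 8) * (2 * π - t + Real.sin t)) (by fun_prop) Real.two_pi_pos.le y]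
  simp only [mul_assoc, intervalIntegral.integral_const_mul, hsqrt]
  generalize ∫ x in 0..2 * π, (2 * π - x + Real.sin x) * Real.cos (x * y) = J
  norm_cast
  field_simp
  ring

theorem extremalF_nonneg (x : ℝ) : 0 ≤ extremalF x := by
  rw [extremalF]
  split_ifs with hx
  · have := Real.sin_le (sub_nonneg.mpr hx)
    rw [Real.sin_two_pi_sub] at this
    exact mul_nonneg (Real.sqrt_nonneg _) (by linarith)
  · exact le_rfl

theorem extremalF_fourier :
    (∀ x : ℝ, 0 ≤ extremalF x) ∧
      (∀ y : ℝ, y ≠ 0 → y ≠ 1 → y ≠ -1 →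
        extremalFhat y = ((Real.sin (Real.pi * y)) ^ 2 / (y ^ 2 * (1 - y ^ 2)) : ℝ)) ∧
      (∀ y : ℝ, 1 ≤ |y| → (extremalFhat y).re ≤ 0 ∧ (extremalFhat y).im = 0) := by
  have hformula (y : ℝ) (h0 : y ≠ 0) (h1 : y ^ 2 ≠ 1) :
      extremalFhat y = ((Real.sin (Real.pi * y)) ^ 2 / (y ^ 2 * (1 - y ^ 2)) : ℝ) := by
    rw [extremalFhat_eq, integral_extremal_mul_cos h0 h1]
    congr 1
    ring
  refine ⟨extremalF_nonneg, fun y h0 h1 h2 => hformula y h0 ?_, fun y hy => ⟨?_, ?_⟩⟩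
  · exact fun h => (sq_eq_one_iff.mp h).elim h1 h2
  · rcases (one_le_sq_iff_one_le_abs y |>.mpr hy).eq_or_lt with hy1 | hy1
    · rw [extremalFhat_eq, integral_extremal_mul_cos_of_sq_eq_one hy1.symm]
      simp
    · rw [hformula y (by rintro rfl; norm_num at hy1) hy1.ne', Complex.ofReal_re]
      exact div_nonpos_of_nonneg_of_nonpos (sq_nonneg _)
        (mul_nonpos_of_nonneg_of_nonpos (sq_nonneg y) (by linarith))
  · rw [extremalFhat_eq, Complex.ofReal_im]
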